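/- For any metric space X, the inner boundary operation is idempotent: ρ(ρX) = ρX, where ρX carries the subspace metric. -/
import Mathlib


/-- Adjacency within the subset `S` of a metric space (the subspace metric agrees
with the ambient one). -/
def AdjIn {X : Type*} [MetricSpace X] (S : Set X) (x y : X) : Prop :=
  x ∈ S ∧ y ∈ S ∧ x ≠ y ∧
    ¬ ∃ p ∈ S, p ≠ x ∧ p ≠ y ∧ dist x p + dist p y = dist x y

/-- The inner boundary of the subset `S`. -/
def innerBdry {X : Type*} [MetricSpace X] (S : Set X) : Set X :=
  {x | ∃ y, AdjIn S x y}

lemma adjIn_symm {X : Type*} [MetricSpace X] {S : Set X} {x y : X}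
    (h : AdjIn S x y) : AdjIn S y x := by
  obtain ⟨hx, hy, hxy, hne⟩ := h
  refine ⟨hy, hx, hxy.symm, fun ⟨p, hp, hpy, hpx, hd⟩ => ?_⟩
  exact hne ⟨p, hp, hpx, hpy, by rw [dist_comm x p, dist_comm p y, dist_comm x y] at *; linarith⟩

theorem stmt_17 {X : Type*} [MetricSpace X] :
    innerBdry (innerBdry (Set.univ : Set X)) = innerBdry (Set.univ : Set X) := by
  apply Set.Subset.antisymm
  · rintro x ⟨y, hx, _⟩
    exact hx
  · rintro x ⟨y, hadj⟩
    obtain ⟨-, -, hxy, hne⟩ := id hadj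
    refine ⟨y, ⟨y, hadj⟩, ⟨x, adjIn_symm hadj⟩, hxy, fun ⟨p, hp, hpx, hpy, hd⟩ => ?_⟩
    exact hne ⟨p, Set.mem_univ p, hpx, hpy, hd⟩
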